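/- arXiv:2305.18204 — 2 statements merged into one kernel-verified Lean document; each statement's English description precedes it below -/
import Mathlib

section
/- Let n, d, m, m' ≥ 1 and σ_x, σ_y > 0. Let the joint KDM over ℝⁿ × ℝᵈ have components (x'⁽ⁱ⁾, y'⁽ⁱ⁾), i = 1, …, m', and nonnegative weights p'₁, …, p'_{m'} summing to 1 with at least one p'ⱼ > 0, and joint density f̂_{x'y'}(x, y) = (σ_x√π)^{-n}(σ_y√π)^{-d} Σᵢ p'ᵢ exp(−‖x − x'⁽ⁱ⁾‖²/σ_x²) exp(−‖y − y'⁽ⁱ⁾‖²/σ_y²). Let the input KDM have components x⁽¹⁾, …, x⁽ᵐ⁾ ∈ ℝⁿ and nonnegative weights p₁, …, p_m summing to 1. Define p''ᵢ = Σ_{ℓ=1}^{m} p_ℓ p'ᵢ exp(−‖x⁽ℓ⁾ − x'⁽ⁱ⁾‖²/σ_x²) / (Σ_{j=1}^{m'} p'ⱼ exp(−‖x⁽ℓ⁾ − x'⁽ʲ⁾‖²/σ_x²)) and the output density f̂_y(y) = (σ_y√π)^{-d} Σᵢ₌₁^{m'} p''ᵢ exp(−‖y − y'⁽ⁱ⁾‖²/σ_y²).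 Then for every y ∈ ℝᵈ, f̂_y(y) = Σ_{ℓ=1}^{m} p_ℓ · f̂_{x'y'}(x⁽ℓ⁾, y) / ∫_{ℝᵈ} f̂_{x'y'}(x⁽ℓ⁾, y') dy'; that is, the inferred output KDM density is the mixture, with weights p_ℓ, of the conditional densities of the joint KDM given x⁽ℓ⁾. -/
/-!
Integrating the joint density over `y` leaves `(σ_x√π)^{-n} Σⱼ p'ⱼ exp(−‖x − x'⁽ʲ⁾‖²/σ_x²)`, because
each normalized Gaussian has mass one. So the conditional density given `x⁽ℓ⁾` is the Gaussian
mixture in `y` with the reweighted coefficients `p'ᵢ exp(−‖x⁽ℓ⁾ − x'⁽ⁱ⁾‖²/σ_x²) / Σⱼ (…)`; averaging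
these over `ℓ` with weights `p_ℓ` and exchanging the two sums gives exactly the weights `p''ᵢ`.
-/

open MeasureTheory Finset Module
open scoped Real

section GaussianMixture

variable {V : Type*} [NormedAddCommGroup V] [InnerProductSpace ℝ V] [FiniteDimensional ℝ V]
  [MeasurableSpace V] [BorelSpace V]

lemma integral_exp_neg_sq_norm_sub_div_sq {σ : ℝ} (hσ : 0 < σ) (w : V) :
    ∫ v, Real.exp (-‖v - w‖ ^ 2 / σ ^ 2) = (σ * √π) ^ finrank ℝ V := by
  have hb : 0 < (σ ^ 2)⁻¹ := by positivity
  have hσπ : 0 ≤ σ * √π := by positivity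
  simp_rw [neg_div, div_eq_inv_mul, ← neg_mul]
  rw [integral_sub_right_eq_self (fun v => Real.exp (-(σ ^ 2)⁻¹ * ‖v‖ ^ 2)) w,
    GaussianFourier.integral_rexp_neg_mul_sq_norm hb,
    show π / (σ ^ 2)⁻¹ = (σ * √π) ^ 2 by rw [mul_pow, Real.sq_sqrt Real.pi_pos.le]; field_simp,
    ← Real.rpow_natCast _ 2, ← Real.rpow_mul hσπ, ← Real.rpow_natCast]
  congr 1
  ring

lemma integrable_exp_neg_sq_norm_sub_div_sq {σ : ℝ} (hσ : 0 < σ) (w : V) :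
    Integrable (fun v => Real.exp (-‖v - w‖ ^ 2 / σ ^ 2)) :=
  Integrable.of_integral_ne_zero <| by
    rw [integral_exp_neg_sq_norm_sub_div_sq hσ]
    positivity

lemma integral_gaussianMixture {ι : Type*} [Fintype ι] {σ : ℝ} (hσ : 0 < σ) (c : ι → ℝ)
    (w : ι → V) :
    ∫ v, (σ * √π) ^ (-(finrank ℝ V : ℤ)) * ∑ i, c i * Real.exp (-‖v - w i‖ ^ 2 / σ ^ 2) =
      ∑ i, c i := by
  have hσπ : σ * √π ≠ 0 := by positivity
  rw [integral_const_mul,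
    integral_finsetSum _ fun i _ => (integrable_exp_neg_sq_norm_sub_div_sq hσ (w i)).const_mul _]
  simp_rw [integral_const_mul, integral_exp_neg_sq_norm_sub_div_sq hσ, ← sum_mul, zpow_neg,
    zpow_natCast]
  field_simp

lemma div_integral_const_mul_gaussianMixture {ι : Type*} [Fintype ι] {σ C : ℝ} (hσ : 0 < σ)
    (hC : C ≠ 0) (c : ι → ℝ) (w : ι → V) (v : V) :
    C * ((σ * √π) ^ (-(finrank ℝ V : ℤ)) * ∑ i, c i * Real.exp (-‖v - w i‖ ^ 2 / σ ^ 2)) /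
        ∫ v', C * ((σ * √π) ^ (-(finrank ℝ V : ℤ)) *
          ∑ i, c i * Real.exp (-‖v' - w i‖ ^ 2 / σ ^ 2)) =
      (σ * √π) ^ (-(finrank ℝ V : ℤ)) *
        ((∑ i, c i * Real.exp (-‖v - w i‖ ^ 2 / σ ^ 2)) / ∑ i, c i) := by
  rw [integral_const_mul, integral_gaussianMixture hσ, mul_div_mul_left _ _ hC, mul_div_assoc]

end GaussianMixture

lemma sum_mul_sum_mul_div_sum {K ι κ : Type*} [Field K] [Fintype ι] [Fintype κ] (p : κ → K)
    (a : κ → ι → K) (e : ι → K) :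
    ∑ ℓ, p ℓ * ((∑ i, a ℓ i * e i) / ∑ j, a ℓ j) =
      ∑ i, (∑ ℓ, p ℓ * a ℓ i / ∑ j, a ℓ j) * e i := by
  simp only [sum_div, mul_sum, sum_mul]
  rw [sum_comm]
  refine sum_congr rfl fun i _ => sum_congr rfl fun ℓ _ => ?_
  ring

theorem kdm_inference_density_eq_mixture_of_conditionals_general
    (n d m m' : ℕ)
    (σx σy : ℝ) (hσx : 0 < σx) (hσy : 0 < σy)
    (x' : Fin m' → EuclideanSpace ℝ (Fin n)) (y' : Fin m' → EuclideanSpace ℝ (Fin d))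
    (p' : Fin m' → ℝ)
    (fxy : EuclideanSpace ℝ (Fin n) → EuclideanSpace ℝ (Fin d) → ℝ)
    (hfxy : ∀ u v, fxy u v =
      (σx * Real.sqrt π) ^ (-(n : ℤ)) * (σy * Real.sqrt π) ^ (-(d : ℤ)) *
        ∑ i, p' i *
          (Real.exp (-‖u - x' i‖ ^ 2 / σx ^ 2) * Real.exp (-‖v - y' i‖ ^ 2 / σy ^ 2)))
    (x : Fin m → EuclideanSpace ℝ (Fin n))
    (p : Fin m → ℝ)
    (p'' : Fin m' → ℝ)
    (hp'' : ∀ i, p'' i =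
      ∑ ℓ, p ℓ * p' i * Real.exp (-‖x ℓ - x' i‖ ^ 2 / σx ^ 2) /
        (∑ j, p' j * Real.exp (-‖x ℓ - x' j‖ ^ 2 / σx ^ 2)))
    (fy : EuclideanSpace ℝ (Fin d) → ℝ)
    (hfy : ∀ v, fy v =
      (σy * Real.sqrt π) ^ (-(d : ℤ)) * ∑ i, p'' i * Real.exp (-‖v - y' i‖ ^ 2 / σy ^ 2)) :
    ∀ v, fy v = ∑ ℓ, p ℓ * (fxy (x ℓ) v / ∫ v', fxy (x ℓ) v') := by
  intro v
  set a : Fin m → Fin m' → ℝ := fun ℓ i => p' i * Real.exp (-‖x ℓ - x' i‖ ^ 2 / σx ^ 2)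
  have hCx : (σx * Real.sqrt π) ^ (-(n : ℤ)) ≠ 0 := by positivity
  have hsection : ∀ ℓ, fxy (x ℓ) = fun v' => (σx * Real.sqrt π) ^ (-(n : ℤ)) *
      ((σy * Real.sqrt π) ^ (-(finrank ℝ (EuclideanSpace ℝ (Fin d)) : ℤ)) *
        ∑ i, a ℓ i * Real.exp (-‖v' - y' i‖ ^ 2 / σy ^ 2)) := fun ℓ => by
    ext v'
    simp only [hfxy, a, finrank_euclideanSpace_fin, mul_assoc]
  simp_rw [hsection, div_integral_const_mul_gaussianMixture hσy hCx, finrank_euclideanSpace_fin,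
    mul_left_comm (p _), ← mul_sum, sum_mul_sum_mul_div_sum, hfy, hp'', a, mul_assoc]

/-- For a joint Gaussian-kernel KDM and an input KDM, the output
density produced by the KDM inference rule equals the mixture, with the input weights
`p_ℓ`, of the conditional densities of the joint KDM given each input component
`x⁽ℓ⁾`. -/
theorem kdm_inference_density_eq_mixture_of_conditionals
    (n d m m' : ℕ) (hn : 1 ≤ n) (hd : 1 ≤ d) (hm : 1 ≤ m) (hm' : 1 ≤ m')
    (σx σy : ℝ) (hσx : 0 < σx) (hσy : 0 < σy)
    (x' : Fin m' → EuclideanSpace ℝ (Fin n)) (y' : Fin m' → EuclideanSpace ℝ (Fin d))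
    (p' : Fin m' → ℝ) (hp' : ∀ i, 0 ≤ p' i) (hp'1 : ∑ i, p' i = 1)
    (hpos : ∃ j, 0 < p' j)
    (fxy : EuclideanSpace ℝ (Fin n) → EuclideanSpace ℝ (Fin d) → ℝ)
    (hfxy : ∀ u v, fxy u v =
      (σx * Real.sqrt π) ^ (-(n : ℤ)) * (σy * Real.sqrt π) ^ (-(d : ℤ)) *
        ∑ i, p' i *
          (Real.exp (-‖u - x' i‖ ^ 2 / σx ^ 2) * Real.exp (-‖v - y' i‖ ^ 2 / σy ^ 2)))
    (x : Fin m → EuclideanSpace ℝ (Fin n))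
    (p : Fin m → ℝ) (hp : ∀ ℓ, 0 ≤ p ℓ) (hp1 : ∑ ℓ, p ℓ = 1)
    (p'' : Fin m' → ℝ)
    (hp'' : ∀ i, p'' i =
      ∑ ℓ, p ℓ * p' i * Real.exp (-‖x ℓ - x' i‖ ^ 2 / σx ^ 2) /
        (∑ j, p' j * Real.exp (-‖x ℓ - x' j‖ ^ 2 / σx ^ 2)))
    (fy : EuclideanSpace ℝ (Fin d) → ℝ)
    (hfy : ∀ v, fy v =
      (σy * Real.sqrt π) ^ (-(d : ℤ)) * ∑ i, p'' i * Real.exp (-‖v - y' i‖ ^ 2 / σy ^ 2)) :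
    ∀ v, fy v = ∑ ℓ, p ℓ * (fxy (x ℓ) v / ∫ v', fxy (x ℓ) v') :=
  kdm_inference_density_eq_mixture_of_conditionals_general n d m m' σx σy hσx hσy x' y' p' fxy hfxy
    x p p'' hp'' fy hfy
end

section
/- Let n, c, m, m' ≥ 1 and σ > 0. Let the joint KDM over ℝⁿ × ℝᶜ have components (x'⁽ⁱ⁾, y'⁽ⁱ⁾) with y'⁽ⁱ⁾ ≠ 0, i = 1, …, m', and nonnegative weights p'₁, …, p'_{m'} summing to 1 with at least one p'ⱼ > 0, and joint density f̂_{x'y'}(x, y) = (σ√π)^{-n} Σᵢ p'ᵢ exp(−‖x − x'⁽ⁱ⁾‖²/σ²) · (⟨y, y'⁽ⁱ⁾⟩/(‖y‖‖y'⁽ⁱ⁾‖))². Let the input KDM have components x⁽¹⁾, …, x⁽ᵐ⁾ ∈ ℝⁿ and nonnegative weights p₁, …, p_m summing to 1. Define p''ᵢ = Σ_{ℓ=1}^{m} p_ℓ p'ᵢ exp(−‖x⁽ℓ⁾ − x'⁽ⁱ⁾‖²/σ²) / (Σ_{j=1}^{m'} p'ⱼ exp(−‖x⁽ℓ⁾ −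 x'⁽ʲ⁾‖²/σ²)) and the output density f̂_y(y) = Σᵢ₌₁^{m'} p''ᵢ (⟨y, y'⁽ⁱ⁾⟩/(‖y‖‖y'⁽ⁱ⁾‖))² for nonzero y ∈ ℝᶜ. Then for every nonzero y ∈ ℝᶜ, f̂_y(y) = Σ_{ℓ=1}^{m} p_ℓ · f̂_{x'y'}(x⁽ℓ⁾, y) / ( Σ_{i=1}^{c} f̂_{x'y'}(x⁽ℓ⁾, e⁽ⁱ⁾) ), where e⁽¹⁾, …, e⁽ᶜ⁾ is the canonical basis of ℝᶜ; that is, the inferred output KDM density is the mixture, with weights p_ℓ, of the conditional categorical densities of the joint KDM given x⁽ℓ⁾. -/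
/-!
Along the canonical basis the squared cosines against a fixed nonzero `y'ⁱ` sum to `1`
(Parseval), so the normalizer `∑ₖ f̂(x, eₖ)` is `(σ√π)^{-n} ∑ᵢ p'ᵢ exp(−‖x − x'ⁱ‖²/σ²)`.
The conditional density given `x⁽ℓ⁾` is therefore the cosine mixture with weights
`p'ᵢ exp(−‖x⁽ℓ⁾ − x'ⁱ‖²/σ²) / ∑ⱼ p'ⱼ exp(−‖x⁽ℓ⁾ − x'ʲ‖²/σ²)`, and averaging these weights
over `ℓ` with the weights `p_ℓ` gives exactly `p''ᵢ`.
-/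

open Finset
open scoped Real RealInnerProductSpace

section CosineMixture

variable {ι κ E : Type*} [Fintype ι] [Fintype κ] [NormedAddCommGroup E] [InnerProductSpace ℝ E]

theorem OrthonormalBasis.sum_sq_inner_div_norm_mul_norm (b : OrthonormalBasis κ ℝ E) {y : E}
    (hy : y ≠ 0) : ∑ k, (⟪b k, y⟫ / (‖b k‖ * ‖y‖)) ^ 2 = 1 := by
  have hy' : ‖y‖ ^ 2 ≠ 0 := pow_ne_zero 2 (norm_ne_zero_iff.2 hy)
  simp only [b.orthonormal.1, one_mul, div_pow, ← sum_div, b.sum_sq_inner_right, div_self hy']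

theorem OrthonormalBasis.sum_mixture_sq_inner_div_norm_mul_norm (b : OrthonormalBasis κ ℝ E)
    (w : ι → ℝ) {y : ι → E} (hy : ∀ i, y i ≠ 0) :
    ∑ k, ∑ i, w i * (⟪b k, y i⟫ / (‖b k‖ * ‖y i‖)) ^ 2 = ∑ i, w i := by
  rw [sum_comm]
  simp only [← mul_sum, b.sum_sq_inner_div_norm_mul_norm (hy _), mul_one]

theorem OrthonormalBasis.mixture_div_sum_mixture_eq (b : OrthonormalBasis κ ℝ E)
    {C : ℝ} (hC : C ≠ 0) (w : ι → ℝ) {y : ι → E} (hy : ∀ i, y i ≠ 0) (v : E) :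
    (C * ∑ i, w i * (⟪v, y i⟫ / (‖v‖ * ‖y i‖)) ^ 2) /
        ∑ k, C * ∑ i, w i * (⟪b k, y i⟫ / (‖b k‖ * ‖y i‖)) ^ 2 =
      ∑ i, w i / (∑ j, w j) * (⟪v, y i⟫ / (‖v‖ * ‖y i‖)) ^ 2 := by
  rw [← mul_sum, b.sum_mixture_sq_inner_div_norm_mul_norm w hy, mul_div_mul_left _ _ hC,
    sum_div]
  exact sum_congr rfl fun i _ => div_mul_eq_mul_div _ _ _ |>.symm

end CosineMixture

theorem kdm_inference_density_eq_mixture_of_conditionals_discrete_general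
    (n c m m' : ℕ)
    (σ : ℝ) (hσ : 0 < σ)
    (x' : Fin m' → EuclideanSpace ℝ (Fin n)) (y' : Fin m' → EuclideanSpace ℝ (Fin c))
    (hy' : ∀ i, y' i ≠ 0)
    (p' : Fin m' → ℝ)
    (fxy : EuclideanSpace ℝ (Fin n) → EuclideanSpace ℝ (Fin c) → ℝ)
    (hfxy : ∀ u v, fxy u v =
      (σ * Real.sqrt π) ^ (-(n : ℤ)) *
        ∑ i, p' i * Real.exp (-‖u - x' i‖ ^ 2 / σ ^ 2) *
          (⟪v, y' i⟫ / (‖v‖ * ‖y' i‖)) ^ 2)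
    (x : Fin m → EuclideanSpace ℝ (Fin n))
    (p : Fin m → ℝ)
    (p'' : Fin m' → ℝ)
    (hp'' : ∀ i, p'' i =
      ∑ ℓ, p ℓ * p' i * Real.exp (-‖x ℓ - x' i‖ ^ 2 / σ ^ 2) /
        (∑ j, p' j * Real.exp (-‖x ℓ - x' j‖ ^ 2 / σ ^ 2)))
    (fy : EuclideanSpace ℝ (Fin c) → ℝ)
    (hfy : ∀ v, v ≠ 0 → fy v = ∑ i, p'' i * (⟪v, y' i⟫ / (‖v‖ * ‖y' i‖)) ^ 2) :
    ∀ v : EuclideanSpace ℝ (Fin c), v ≠ 0 →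
      fy v = ∑ ℓ, p ℓ *
        (fxy (x ℓ) v / ∑ i, fxy (x ℓ) (EuclideanSpace.single i (1 : ℝ))) := by
  intro v hv
  have hC : (σ * Real.sqrt π) ^ (-(n : ℤ)) ≠ 0 := by positivity
  have hconditional : ∀ ℓ, fxy (x ℓ) v / ∑ i, fxy (x ℓ) (EuclideanSpace.single i (1 : ℝ)) =
      ∑ i, p' i * Real.exp (-‖x ℓ - x' i‖ ^ 2 / σ ^ 2) /
          (∑ j, p' j * Real.exp (-‖x ℓ - x' j‖ ^ 2 / σ ^ 2)) *
        (⟪v, y' i⟫ / (‖v‖ * ‖y' i‖)) ^ 2 := fun ℓ => by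
    simpa only [hfxy, EuclideanSpace.basisFun_apply] using
      (EuclideanSpace.basisFun (Fin c) ℝ).mixture_div_sum_mixture_eq hC _ hy' v
  rw [hfy v hv, sum_congr rfl fun ℓ _ => congrArg (p ℓ * ·) (hconditional ℓ)]
  simp only [hp'', sum_mul, mul_sum]
  rw [sum_comm]
  exact sum_congr rfl fun ℓ _ => sum_congr rfl fun i _ => by ring

/-- For a joint (Gaussian ⊗ cosine)-kernel KDM and an input KDM, the
inferred output density equals the mixture, with the input weights `p_ℓ`, of the
conditional categorical densities of the joint KDM given each input component `x⁽ℓ⁾`,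
where the conditional normalizer is the sum of the joint density over the canonical
basis of the discrete variable. -/
theorem kdm_inference_density_eq_mixture_of_conditionals_discrete
    (n c m m' : ℕ) (hn : 1 ≤ n) (hc : 1 ≤ c) (hm : 1 ≤ m) (hm' : 1 ≤ m')
    (σ : ℝ) (hσ : 0 < σ)
    (x' : Fin m' → EuclideanSpace ℝ (Fin n)) (y' : Fin m' → EuclideanSpace ℝ (Fin c))
    (hy' : ∀ i, y' i ≠ 0)
    (p' : Fin m' → ℝ) (hp' : ∀ i, 0 ≤ p' i) (hp'1 : ∑ i, p' i = 1)
    (hpos : ∃ j, 0 < p' j)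
    (fxy : EuclideanSpace ℝ (Fin n) → EuclideanSpace ℝ (Fin c) → ℝ)
    (hfxy : ∀ u v, fxy u v =
      (σ * Real.sqrt π) ^ (-(n : ℤ)) *
        ∑ i, p' i * Real.exp (-‖u - x' i‖ ^ 2 / σ ^ 2) *
          (⟪v, y' i⟫ / (‖v‖ * ‖y' i‖)) ^ 2)
    (x : Fin m → EuclideanSpace ℝ (Fin n))
    (p : Fin m → ℝ) (hp : ∀ ℓ, 0 ≤ p ℓ) (hp1 : ∑ ℓ, p ℓ = 1)
    (p'' : Fin m' → ℝ)
    (hp'' : ∀ i, p'' i =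
      ∑ ℓ, p ℓ * p' i * Real.exp (-‖x ℓ - x' i‖ ^ 2 / σ ^ 2) /
        (∑ j, p' j * Real.exp (-‖x ℓ - x' j‖ ^ 2 / σ ^ 2)))
    (fy : EuclideanSpace ℝ (Fin c) → ℝ)
    (hfy : ∀ v, v ≠ 0 → fy v = ∑ i, p'' i * (⟪v, y' i⟫ / (‖v‖ * ‖y' i‖)) ^ 2) :
    ∀ v : EuclideanSpace ℝ (Fin c), v ≠ 0 →
      fy v = ∑ ℓ, p ℓ *
        (fxy (x ℓ) v / ∑ i, fxy (x ℓ) (EuclideanSpace.single i (1 : ℝ))) :=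
  kdm_inference_density_eq_mixture_of_conditionals_discrete_general n c m m' σ hσ x' y' hy' p' fxy
    hfxy x p p'' hp'' fy hfy
end
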